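/- Let f : ℝ → ℝ be a probability density function (f ≥ 0 and ∫_ℝ f = 1) that is differentiable everywhere with |f′(x)| ≤ M for all x ∈ ℝ, and let r > 0. Then |∫_{−∞}^{+∞} Φ(−|ε|/r) · (2·1{ε ≤ 0} − 1) · f(ε) dε| ≤ M r² / 2, where Φ is the standard normal cumulative distribution function. -/

import Mathlib

open MeasureTheory Real

/-- The standard normal cumulative distribution function
`Φ(x) = ∫_{-∞}^x (1/√(2π)) e^{-s²/2} ds`. -/
noncomputable def stdNormalCDF (x : ℝ) : ℝ :=
  ∫ s in Set.Iic x, (Real.sqrt (2 * Real.pi))⁻¹ * Real.exp (-s ^ 2 / 2)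

/-!
Pairing `ε` with `-ε` folds the integral onto `(0, ∞)` as
`∫₀^∞ Φ(-ε/r) (f(-ε) - f(ε)) dε`, and `|f(-ε) - f(ε)| ≤ 2Mε` by the mean value theorem.
What remains is `∫₀^∞ ε Φ(-ε/r) dε = r² ∫₀^∞ t Φ(-t) dt = r²/4`, read off from the
antiderivative `((t² - 1) Φ(-t) - t φ(t)) / 2` of `t Φ(-t)`, which vanishes at `+∞` by the
Gaussian tail bound `Φ(-t) ≤ e^{-t}` for `t ≥ 2`.
-/

open Set Filter Topology ProbabilityTheory

noncomputable def stdNormalPDF (x : ℝ) : ℝ :=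
  (√(2 * π))⁻¹ * exp (-x ^ 2 / 2)

lemma stdNormalPDF_eq_gaussianPDFReal : stdNormalPDF = gaussianPDFReal 0 1 := by
  ext x
  simp [stdNormalPDF, gaussianPDFReal]

lemma stdNormalPDF_nonneg (x : ℝ) : 0 ≤ stdNormalPDF x := by
  unfold stdNormalPDF
  positivity

lemma stdNormalPDF_neg (x : ℝ) : stdNormalPDF (-x) = stdNormalPDF x := by
  simp [stdNormalPDF]

lemma continuous_stdNormalPDF : Continuous stdNormalPDF := by
  unfold stdNormalPDF
  fun_prop

lemma integrable_stdNormalPDF : Integrable stdNormalPDF := by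
  rw [stdNormalPDF_eq_gaussianPDFReal]
  exact integrable_gaussianPDFReal 0 1

lemma integral_stdNormalPDF : ∫ x, stdNormalPDF x = 1 := by
  rw [stdNormalPDF_eq_gaussianPDFReal]
  exact integral_gaussianPDFReal_eq_one 0 one_ne_zero

lemma hasDerivAt_stdNormalPDF (x : ℝ) : HasDerivAt stdNormalPDF (-x * stdNormalPDF x) x := by
  have h : HasDerivAt (fun y : ℝ => -y ^ 2 / 2) (-x) x :=
    ((hasDerivAt_pow 2 x).fun_neg.div_const 2).congr_deriv (by norm_num; ring)
  exact (h.exp.const_mul (√(2 * π))⁻¹).congr_deriv (by rw [stdNormalPDF]; ring)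

lemma stdNormalPDF_le_exp_neg {x : ℝ} (hx : 2 ≤ x) : stdNormalPDF x ≤ exp (-x) := by
  have hc : (√(2 * π))⁻¹ ≤ 1 :=
    inv_le_one_of_one_le₀ (one_le_sqrt.2 (by linarith [pi_gt_three]))
  have he : exp (-x ^ 2 / 2) ≤ exp (-x) := exp_le_exp.2 (by nlinarith)
  exact (mul_le_of_le_one_left (exp_pos _).le hc).trans he

lemma stdNormalCDF_eq_setIntegral (x : ℝ) : stdNormalCDF x = ∫ s in Iic x, stdNormalPDF s := rfl

lemma stdNormalCDF_nonneg (x : ℝ) : 0 ≤ stdNormalCDF x :=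
  setIntegral_nonneg measurableSet_Iic fun s _ => stdNormalPDF_nonneg s

lemma stdNormalCDF_neg (x : ℝ) : stdNormalCDF (-x) = ∫ s in Ioi x, stdNormalPDF s := by
  rw [stdNormalCDF_eq_setIntegral, ← integral_comp_neg_Ioi]
  simp_rw [stdNormalPDF_neg]

lemma stdNormalCDF_add_stdNormalCDF_neg (x : ℝ) : stdNormalCDF x + stdNormalCDF (-x) = 1 := by
  rw [stdNormalCDF_neg, stdNormalCDF_eq_setIntegral, intervalIntegral.integral_Iic_add_Ioi
    integrable_stdNormalPDF.integrableOn integrable_stdNormalPDF.integrableOn,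
    integral_stdNormalPDF]

lemma stdNormalCDF_zero : stdNormalCDF 0 = 1 / 2 := by
  have h := stdNormalCDF_add_stdNormalCDF_neg 0
  rw [neg_zero] at h
  linarith

lemma hasDerivAt_stdNormalCDF (x : ℝ) : HasDerivAt stdNormalCDF (stdNormalPDF x) x := by
  have hint : ∀ a, IntegrableOn stdNormalPDF (Iic a) :=
    fun _ => integrable_stdNormalPDF.integrableOn
  have heq : stdNormalCDF = fun y => stdNormalCDF 0 + ∫ t in (0 : ℝ)..y, stdNormalPDF t := by
    funext y
    rw [stdNormalCDF_eq_setIntegral, stdNormalCDF_eq_setIntegral,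
      ← intervalIntegral.integral_Iic_sub_Iic (hint 0) (hint y)]
    ring
  rw [heq]
  exact (intervalIntegral.integral_hasDerivAt_right integrable_stdNormalPDF.intervalIntegrable
    (continuous_stdNormalPDF.stronglyMeasurableAtFilter _ _)
    continuous_stdNormalPDF.continuousAt).const_add _

lemma stdNormalCDF_neg_le_exp_neg {x : ℝ} (hx : 2 ≤ x) : stdNormalCDF (-x) ≤ exp (-x) := by
  rw [stdNormalCDF_neg, ← integral_exp_neg_Ioi]
  exact setIntegral_mono_on integrable_stdNormalPDF.integrableOn
    (by simpa using exp_neg_integrableOn_Ioi x one_pos)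
    measurableSet_Ioi fun s hs => stdNormalPDF_le_exp_neg (hx.trans (le_of_lt hs))

lemma tendsto_pow_mul_stdNormalPDF (n : ℕ) :
    Tendsto (fun x => x ^ n * stdNormalPDF x) atTop (𝓝 0) := by
  refine squeeze_zero' ?_ ?_ (tendsto_pow_mul_exp_neg_atTop_nhds_zero n)
  · filter_upwards [eventually_ge_atTop 0] with x hx
    exact mul_nonneg (pow_nonneg hx n) (stdNormalPDF_nonneg x)
  · filter_upwards [eventually_ge_atTop 2] with x hx
    exact mul_le_mul_of_nonneg_left (stdNormalPDF_le_exp_neg hx) (by positivity)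

lemma tendsto_pow_mul_stdNormalCDF_neg (n : ℕ) :
    Tendsto (fun x => x ^ n * stdNormalCDF (-x)) atTop (𝓝 0) := by
  refine squeeze_zero' ?_ ?_ (tendsto_pow_mul_exp_neg_atTop_nhds_zero n)
  · filter_upwards [eventually_ge_atTop 0] with x hx
    exact mul_nonneg (pow_nonneg hx n) (stdNormalCDF_nonneg _)
  · filter_upwards [eventually_ge_atTop 2] with x hx
    exact mul_le_mul_of_nonneg_left (stdNormalCDF_neg_le_exp_neg hx) (by positivity)

noncomputable def primitiveMulStdNormalCDFNeg (t : ℝ) : ℝ :=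
  ((t ^ 2 - 1) * stdNormalCDF (-t) - t * stdNormalPDF t) / 2

lemma hasDerivAt_primitiveMulStdNormalCDFNeg (t : ℝ) :
    HasDerivAt primitiveMulStdNormalCDFNeg (t * stdNormalCDF (-t)) t := by
  have hΦ : HasDerivAt (fun s => stdNormalCDF (-s)) (-stdNormalPDF t) t :=
    ((hasDerivAt_stdNormalCDF (-t)).comp t (hasDerivAt_neg' t)).congr_deriv
      (by rw [stdNormalPDF_neg]; ring)
  have h := ((((hasDerivAt_pow 2 t).sub_const 1).mul hΦ).sub
    ((hasDerivAt_id' t).mul (hasDerivAt_stdNormalPDF t))).div_const 2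
  exact h.congr_deriv (by norm_num; ring)

lemma tendsto_primitiveMulStdNormalCDFNeg :
    Tendsto primitiveMulStdNormalCDFNeg atTop (𝓝 0) := by
  have h := (((tendsto_pow_mul_stdNormalCDF_neg 2).sub (tendsto_pow_mul_stdNormalCDF_neg 0)).sub
    (tendsto_pow_mul_stdNormalPDF 1)).div_const 2
  convert h using 1
  · ext t
    simp only [primitiveMulStdNormalCDFNeg]
    ring
  · norm_num

lemma primitiveMulStdNormalCDFNeg_zero : primitiveMulStdNormalCDFNeg 0 = -1 / 4 := by
  norm_num [primitiveMulStdNormalCDFNeg, stdNormalCDF_zero]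

lemma integrableOn_Ioi_mul_stdNormalCDF_neg :
    IntegrableOn (fun t => t * stdNormalCDF (-t)) (Ioi 0) :=
  integrableOn_Ioi_deriv_of_nonneg' (fun t _ => hasDerivAt_primitiveMulStdNormalCDFNeg t)
    (fun _ ht => mul_nonneg (le_of_lt ht) (stdNormalCDF_nonneg _))
    tendsto_primitiveMulStdNormalCDFNeg

lemma integral_Ioi_mul_stdNormalCDF_neg : ∫ t in Ioi 0, t * stdNormalCDF (-t) = 1 / 4 := by
  rw [integral_Ioi_of_hasDerivAt_of_tendsto' (fun t _ => hasDerivAt_primitiveMulStdNormalCDFNeg t)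
    integrableOn_Ioi_mul_stdNormalCDF_neg tendsto_primitiveMulStdNormalCDFNeg,
    primitiveMulStdNormalCDFNeg_zero]
  norm_num

lemma mul_stdNormalCDF_neg_div {r : ℝ} (hr : r ≠ 0) (u : ℝ) :
    u * stdNormalCDF (-u / r) = r * (r⁻¹ * u * stdNormalCDF (-(r⁻¹ * u))) := by
  field_simp

lemma integrableOn_Ioi_mul_stdNormalCDF_neg_div {r : ℝ} (hr : 0 < r) :
    IntegrableOn (fun u => u * stdNormalCDF (-u / r)) (Ioi 0) := by
  simp_rw [mul_stdNormalCDF_neg_div hr.ne']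
  refine Integrable.const_mul ?_ r
  rw [← IntegrableOn, integrableOn_Ioi_comp_mul_left_iff (fun t => t * stdNormalCDF (-t)) 0
    (inv_pos.2 hr), mul_zero]
  exact integrableOn_Ioi_mul_stdNormalCDF_neg

lemma integral_Ioi_mul_stdNormalCDF_neg_div {r : ℝ} (hr : 0 < r) :
    ∫ u in Ioi 0, u * stdNormalCDF (-u / r) = r ^ 2 / 4 := by
  simp_rw [mul_stdNormalCDF_neg_div hr.ne']
  rw [integral_const_mul, integral_comp_mul_left_Ioi (fun t => t * stdNormalCDF (-t)) 0
    (inv_pos.2 hr), mul_zero, integral_Ioi_mul_stdNormalCDF_neg, smul_eq_mul, inv_inv]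
  ring

lemma integral_eq_integral_Ioi_add_comp_neg {E : Type*} [NormedAddCommGroup E] [NormedSpace ℝ E]
    {g : ℝ → E} (hg : Integrable g) : ∫ x, g x = ∫ x in Ioi 0, (g x + g (-x)) := by
  rw [integral_add hg.integrableOn hg.comp_neg.integrableOn, integral_comp_neg_Ioi, neg_zero,
    add_comm, intervalIntegral.integral_Iic_add_Ioi hg.integrableOn hg.integrableOn]

noncomputable def scoreBiasIntegrand (r : ℝ) (f : ℝ → ℝ) (ε : ℝ) : ℝ :=
  stdNormalCDF (-|ε| / r) * (2 * (if ε ≤ 0 then (1 : ℝ) else 0) - 1) * f ε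

lemma scoreBiasIntegrand_add_neg {r ε : ℝ} (f : ℝ → ℝ) (hε : 0 < ε) :
    scoreBiasIntegrand r f ε + scoreBiasIntegrand r f (-ε) =
      stdNormalCDF (-ε / r) * (f (-ε) - f ε) := by
  simp only [scoreBiasIntegrand, abs_neg, abs_of_pos hε, if_neg hε.not_ge,
    if_pos (neg_nonpos.2 hε.le)]
  ring

lemma norm_scoreBiasIntegrand_add_neg_le {f : ℝ → ℝ} {M r ε : ℝ}
    (hf_diff : Differentiable ℝ f) (hf_deriv : ∀ x, |deriv f x| ≤ M) (hε : 0 < ε) :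
    ‖scoreBiasIntegrand r f ε + scoreBiasIntegrand r f (-ε)‖ ≤
      2 * M * (ε * stdNormalCDF (-ε / r)) := by
  have hlip : ‖f (-ε) - f ε‖ ≤ M * ‖-ε - ε‖ :=
    convex_univ.norm_image_sub_le_of_norm_deriv_le (fun z _ => hf_diff z)
      (fun z _ => hf_deriv z) (mem_univ ε) (mem_univ (-ε))
  rw [show -ε - ε = -(2 * ε) by ring, norm_neg,
    Real.norm_of_nonneg (by positivity : (0 : ℝ) ≤ 2 * ε)] at hlip
  rw [scoreBiasIntegrand_add_neg f hε, norm_mul, Real.norm_of_nonneg (stdNormalCDF_nonneg _)]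
  calc stdNormalCDF (-ε / r) * ‖f (-ε) - f ε‖ ≤ stdNormalCDF (-ε / r) * (M * (2 * ε)) :=
        mul_le_mul_of_nonneg_left hlip (stdNormalCDF_nonneg _)
    _ = 2 * M * (ε * stdNormalCDF (-ε / r)) := by ring

theorem abs_integral_smoothed_score_bias_le_general {f : ℝ → ℝ} {M r : ℝ}
    (hf_diff : Differentiable ℝ f) (hf_deriv : ∀ x, |deriv f x| ≤ M)
    (hr : 0 < r) :
    |∫ ε : ℝ, stdNormalCDF (-|ε| / r) *
        (2 * (if ε ≤ 0 then (1 : ℝ) else 0) - 1) * f ε| ≤ M * r ^ 2 / 2 := by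
  change |∫ ε, scoreBiasIntegrand r f ε| ≤ _
  by_cases hg : Integrable (scoreBiasIntegrand r f)
  swap
  · rw [integral_undef hg, abs_zero]
    have hM : 0 ≤ M := (abs_nonneg _).trans (hf_deriv 0)
    positivity
  calc |∫ ε, scoreBiasIntegrand r f ε|
      = ‖∫ ε in Ioi 0, (scoreBiasIntegrand r f ε + scoreBiasIntegrand r f (-ε))‖ := by
        rw [integral_eq_integral_Ioi_add_comp_neg hg, Real.norm_eq_abs]
    _ ≤ ∫ ε in Ioi 0, 2 * M * (ε * stdNormalCDF (-ε / r)) :=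
        norm_integral_le_of_norm_le ((integrableOn_Ioi_mul_stdNormalCDF_neg_div hr).const_mul _)
          (ae_restrict_of_forall_mem measurableSet_Ioi fun _ hε =>
            norm_scoreBiasIntegrand_add_neg_le hf_diff hf_deriv hε)
    _ = M * r ^ 2 / 2 := by
        rw [integral_const_mul, integral_Ioi_mul_stdNormalCDF_neg_div hr]
        ring

/-- If `f` is an everywhere differentiable probability density with `|f'| ≤ M`
and `r > 0`, then `|∫ Φ(-|ε|/r) (2·1{ε ≤ 0} - 1) f(ε) dε| ≤ M r² / 2`. -/
theorem abs_integral_smoothed_score_bias_le {f : ℝ → ℝ} {M r : ℝ}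
    (hf_nonneg : ∀ x, 0 ≤ f x) (hf_int : ∫ x : ℝ, f x = 1)
    (hf_diff : Differentiable ℝ f) (hf_deriv : ∀ x, |deriv f x| ≤ M)
    (hr : 0 < r) :
    |∫ ε : ℝ, stdNormalCDF (-|ε| / r) *
        (2 * (if ε ≤ 0 then (1 : ℝ) else 0) - 1) * f ε| ≤ M * r ^ 2 / 2 :=
  abs_integral_smoothed_score_bias_le_general hf_diff hf_deriv hr
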